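/- Let W(q, a) = Σ_{r=1, (r,q)=1}^{q} e(a·r^k/q). For every prime p and integer a with p ∤ a, one has |W(p, a)| ≤ 1 + ((k, p−1) − 1)·√p, where (k, p−1) is the gcd of k and p−1. -/

import Mathlib

/-!
Let `d = gcd(k, p - 1)` and let `χ` be a multiplicative character of order `d` modulo `p`.
Since `(ℤ/p)ˣ` is cyclic, `x ↦ x^k` is `d`-to-one onto the subgroup of index `d` of `k`-th
powers, which is exactly the kernel of `χ`; hence `#{x | x^k = y} = ∑_{t<d} χ(y)^t`. Substituting
this into `W(p, a) = ∑_x ψ(x^k)`, with `ψ(y) = e(a y / p)`, gives `W(p, a) = ∑_{t<d} G(χ^t, ψ)`.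
The term `t = 0` is `-1`, and the other `d - 1` Gauss sums have absolute value `√p`.
-/

open Finset

/-- The complete exponential sum `W(q,a) = Σ_{r=1, (r,q)=1}^q e(a·r^k/q)`,
with `e(z) = e^{2πiz}`. -/
noncomputable def expSumW (k q : ℕ) (a : ℤ) : ℂ :=
  ∑ r ∈ (Finset.Icc 1 q).filter (fun r => Nat.gcd r q = 1),
    Complex.exp (2 * Real.pi * Complex.I * ((a : ℂ) * (r : ℂ) ^ k / (q : ℂ)))

namespace MulChar

section CyclicUnits

variable {M R : Type*} [CommMonoid M] [Finite Mˣ] [IsCyclic Mˣ] {k : ℕ}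

theorem mem_range_powMonoidHom_iff [CommMonoidWithZero R] {χ : MulChar M R}
    (hχ : orderOf χ = (Nat.card Mˣ).gcd k) (y : Mˣ) :
    y ∈ (powMonoidHom k : Mˣ →* Mˣ).range ↔ χ y = 1 := by
  -- The `k`-th powers form a subgroup of `ker χ` of index `orderOf χ`, and `orderOf χ` divides
  -- the index of `ker χ`, since `χ` is trivial on `(ker χ).index`-th powers.
  set K := χ.toUnitHom.ker
  have mem_K (x : Mˣ) : x ∈ K ↔ χ x = 1 := by
    rw [MonoidHom.mem_ker, Units.ext_iff, coe_toUnitHom, Units.val_one]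
  have hχk : χ ^ k = 1 := orderOf_dvd_iff_pow_eq_one.mp (hχ ▸ Nat.gcd_dvd_right _ _)
  have hle : (powMonoidHom k).range ≤ K := by
    rintro _ ⟨x, rfl⟩
    rw [mem_K, powMonoidHom_apply, Units.val_pow_eq_pow_val, map_pow, ← pow_apply_coe, hχk,
      one_apply_coe]
  have hχK : χ ^ K.index = 1 := ext fun x => by
    have hx := (mem_K _).mp (K.pow_index_mem x)
    rw [Units.val_pow_eq_pow_val, map_pow] at hx
    rw [pow_apply_coe, hx, one_apply_coe]
  have hindex : K.index = (powMonoidHom k : Mˣ →* Mˣ).range.index := by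
    refine Nat.dvd_antisymm (Subgroup.index_dvd_of_le hle) ?_
    rw [IsCyclic.index_powMonoidHom_range, ← hχ]
    exact orderOf_dvd_of_pow_eq_one hχK
  have hrange : (powMonoidHom k).range = K :=
    hle.eq_of_not_lt fun hlt => (Subgroup.index_strictAnti hlt).ne' hindex.symm
  rw [hrange, mem_K]

theorem card_pow_eq_eq_sum_pow [Fintype Mˣ] [DecidableEq Mˣ] [CommRing R] [IsDomain R]
    {χ : MulChar M R} (hχ : orderOf χ = (Nat.card Mˣ).gcd k) (y : Mˣ) :
    (#{x : Mˣ | x ^ k = y} : R) = ∑ t ∈ range (orderOf χ), χ y ^ t := by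
  by_cases hy : y ∈ (powMonoidHom k : Mˣ →* Mˣ).range
  · have hfiber : #{x : Mˣ | x ^ k = y} = #{x : Mˣ | x ^ k = 1} :=
      MonoidHom.card_fiber_eq_of_mem_range (powMonoidHom k) hy ⟨1, one_pow k⟩
    have hker : #{x : Mˣ | x ^ k = 1} = (Nat.card Mˣ).gcd k := by
      rw [← IsCyclic.card_powMonoidHom_ker, ← Fintype.card_subtype, ← Nat.card_eq_fintype_card]
      rfl
    rw [(mem_range_powMonoidHom_iff hχ y).mp hy, hfiber, hker, hχ]
    simp
  · have hempty : #{x : Mˣ | x ^ k = y} = 0 :=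
      card_eq_zero.mpr <| filter_eq_empty_iff.mpr fun x _ hx => hy ⟨x, hx⟩
    have hχy : χ y ≠ 1 := fun h => hy ((mem_range_powMonoidHom_iff hχ y).mpr h)
    have hgeom := geom_sum_mul (χ y) (orderOf χ)
    rw [← pow_apply_coe, pow_orderOf_eq_one, one_apply_coe, sub_self] at hgeom
    rw [hempty, Nat.cast_zero, eq_comm]
    exact (mul_eq_zero.mp hgeom).resolve_right (sub_ne_zero.mpr hχy)

end CyclicUnits

end MulChar

section GaussSum

variable {A R : Type*} [CommRing A] [Fintype A] [DecidableEq A] [CommRing R]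

theorem gaussSum_eq_sum_units (χ : MulChar A R) (ψ : AddChar A R) :
    gaussSum χ ψ = ∑ x : Aˣ, χ x * ψ x :=
  (Fintype.sum_of_injective _ Units.val_injective (fun x : Aˣ => χ x * ψ x) (fun x => χ x * ψ x)
    (fun x hx => by rw [χ.map_nonunit fun h => hx ⟨h.unit, h.unit_spec⟩, zero_mul])
    fun _ => rfl).symm

theorem sum_units_pow_eq_sum_gaussSum [IsCyclic Aˣ] [IsDomain R] {k : ℕ}
    {χ : MulChar A R} (hχ : orderOf χ = (Nat.card Aˣ).gcd k) (ψ : AddChar A R) :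
    ∑ x : Aˣ, ψ ↑(x ^ k) = ∑ t ∈ range (orderOf χ), gaussSum (χ ^ t) ψ := calc
  ∑ x : Aˣ, ψ ↑(x ^ k) = ∑ y : Aˣ, (#{x : Aˣ | x ^ k = y} : R) * ψ y := by
    rw [← sum_fiberwise' univ (· ^ k) (fun y : Aˣ => ψ y)]
    simp only [sum_const, nsmul_eq_mul]
  _ = ∑ t ∈ range (orderOf χ), ∑ y : Aˣ, (χ ^ t) y * ψ y := by
    simp only [MulChar.card_pow_eq_eq_sum_pow hχ, sum_mul, MulChar.pow_apply_coe]
    exact sum_comm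
  _ = ∑ t ∈ range (orderOf χ), gaussSum (χ ^ t) ψ := by
    simp only [gaussSum_eq_sum_units]

theorem norm_gaussSum_eq_sqrt_card {F : Type*} [Field F] [Fintype F] {χ : MulChar F ℂ}
    (hχ : χ ≠ 1) {ψ : AddChar F ℂ} (hψ : ψ ≠ 1) :
    ‖gaussSum χ ψ‖ = √(Fintype.card F) := by
  have h := gaussSum_mul_gaussSum_eq_card hχ (AddChar.IsPrimitive.of_ne_one hψ)
  rw [← star_gaussSum_eq, Complex.star_def, Complex.mul_conj, ← Complex.ofReal_natCast,
    Complex.ofReal_inj] at h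
  rw [Complex.norm_def, h]

end GaussSum

theorem norm_sum_units_pow_le {F : Type*} [Field F] [Fintype F] [DecidableEq F]
    {ψ : AddChar F ℂ} (hψ : ψ ≠ 1) (k : ℕ) :
    ‖∑ x : Fˣ, ψ ↑(x ^ k)‖ ≤
      1 + ((Nat.gcd k (Fintype.card F - 1) : ℝ) - 1) * √(Fintype.card F) := by
  set d := Nat.gcd k (Fintype.card F - 1)
  have hd : d ≠ 0 := Nat.gcd_ne_zero_right (by have := Fintype.one_lt_card (α := F); omega)
  obtain ⟨χ, hχ⟩ : ∃ χ : MulChar F ℂ, orderOf χ = d :=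
    MulChar.exists_mulChar_orderOf F (Nat.gcd_dvd_right k _) (Complex.isPrimitiveRoot_exp d hd)
  have hχ' : orderOf χ = (Nat.card Fˣ).gcd k := by
    rw [hχ, Nat.card_eq_fintype_card, Fintype.card_units, Nat.gcd_comm]
  obtain ⟨e, he⟩ : ∃ e, d = e + 1 := Nat.exists_eq_succ_of_ne_zero hd
  have hχt (t : ℕ) (ht : t ∈ range e) : ‖gaussSum (χ ^ (t + 1)) ψ‖ = √(Fintype.card F) :=
    norm_gaussSum_eq_sqrt_card (pow_ne_one_of_lt_orderOf t.succ_ne_zero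
      (by rw [hχ, he]; simpa using ht)) hψ
  rw [sum_units_pow_eq_sum_gaussSum hχ' ψ, hχ, he, sum_range_succ', pow_zero,
    gaussSum_one_left hψ]
  calc ‖∑ t ∈ range e, gaussSum (χ ^ (t + 1)) ψ + -1‖
      ≤ ∑ t ∈ range e, ‖gaussSum (χ ^ (t + 1)) ψ‖ + ‖(-1 : ℂ)‖ :=
        (norm_add_le _ _).trans (add_le_add_left (norm_sum_le _ _) _)
    _ = 1 + ((e + 1 : ℕ) - 1 : ℝ) * √(Fintype.card F) := by
        rw [sum_congr rfl hχt]
        simp only [sum_const, card_range, nsmul_eq_mul, norm_neg, norm_one, Nat.cast_add,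
          Nat.cast_one, add_sub_cancel_right]
        ring

theorem expSumW_eq_sum_units (k p : ℕ) [Fact p.Prime] (a : ℤ) :
    expSumW k p a = ∑ x : (ZMod p)ˣ, (ZMod.stdAddChar.mulShift (a : ZMod p)) ↑(x ^ k) := by
  have hp := (Fact.out : p.Prime)
  refine sum_bij' (fun r hr => ZMod.unitOfCoprime r (mem_filter.mp hr).2)
    (fun x _ => (x : ZMod p).val) (fun _ _ => mem_univ _) (fun x _ => ?_) (fun r hr => ?_)
    (fun x _ => Units.ext (ZMod.natCast_zmod_val _)) (fun r _ => ?_)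
  · have hx0 : (x : ZMod p).val ≠ 0 := (ZMod.val_ne_zero _).mpr x.ne_zero
    simp only [mem_filter, mem_Icc]
    exact ⟨⟨Nat.one_le_iff_ne_zero.mpr hx0, (ZMod.val_lt _).le⟩, ZMod.val_coe_unit_coprime x⟩
  · obtain ⟨hr, hcop⟩ := mem_filter.mp hr
    have hrp : r ≠ p := by rintro rfl; simp [hp.ne_one] at hcop
    rw [ZMod.coe_unitOfCoprime, ZMod.val_natCast,
      Nat.mod_eq_of_lt ((mem_Icc.mp hr).2.lt_of_ne hrp)]
  · have hcast : (a : ZMod p) * (r : ZMod p) ^ k = ((a * r ^ k : ℤ) : ZMod p) := by push_cast; rfl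
    rw [AddChar.mulShift_apply, Units.val_pow_eq_pow_val, ZMod.coe_unitOfCoprime, hcast,
      ZMod.stdAddChar_coe]
    push_cast
    ring_nf

theorem stmt8 (k : ℕ) (p : ℕ) (hp : p.Prime) (a : ℤ)
    (ha : ¬ (p : ℤ) ∣ a) :
    ‖expSumW k p a‖ ≤
      1 + ((Nat.gcd k (p - 1) : ℝ) - 1) * Real.sqrt p := by
  have : Fact p.Prime := ⟨hp⟩
  have hψ : ZMod.stdAddChar.mulShift (a : ZMod p) ≠ 1 :=
    ZMod.isPrimitive_stdAddChar p <| by rwa [Ne, ZMod.intCast_zmod_eq_zero_iff_dvd]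
  rw [expSumW_eq_sum_units]
  simpa only [ZMod.card] using norm_sum_units_pow_le hψ k
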